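/- Let 𝔤 be a finite-dimensional complex reductive Lie algebra with rank r, and let F₁,…,F_r be algebraically independent generators of S(𝔤)^G. For ξ ∈ 𝔤* and a ∈ 𝔤*, let V_{a,ξ} be the image in T_ξ(Gξ)* = (𝔤ξ)* of the span of the differentials d_ξ(∂_a^k F_i). Then V_{a,ξ} is an isotropic subspace of the symplectic vector space 𝔤ξ (with the Kirillov–Kostant–Souriau form), and hence 2·dim V_{a,ξ} ≤ dim(Gξ). -/

import Mathlib

/-!
The Lie–Poisson bracket `{f, p} = Σ ∂ᵢf ∂ⱼp [eᵢ, eⱼ]` and the constant bracket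
`{f, p}_a = Σ ∂ᵢf ∂ⱼp a([eᵢ, eⱼ])` are compatible: `∂_a{f, p} = {∂_a f, p} + {f, ∂_a p} + {f, p}_a`.
For an invariant `F`, which Poisson commutes with everything, induction on `k` gives
`{∂_a^(k+1) F, p} = -(k+1) {∂_a^k F, p}_a`; playing this identity for `F` against the one for `G`
shows that all `∂_a^k F` and `∂_a^l G` commute for both brackets (Mishchenko–Fomenko).
Since `{f, p}(ξ) = ξ([d_ξ f, d_ξ p])`, the differentials span a subspace `W` isotropic for the
alternating form `ξ([·,·])`. If `K` is the kernel of that form (the stabiliser of `ξ`), then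
`W + K` lies in the orthogonal of `W`, of dimension `dim 𝔤 - dim W + dim (W ∩ K)`, whence
`2 (dim W - dim (W ∩ K)) ≤ dim 𝔤 - dim K = dim Gξ`.
-/

open MvPolynomial

variable {ι : Type*} [Fintype ι] [DecidableEq ι]
variable {g : Type*} [LieRing g] [LieAlgebra ℂ g]

noncomputable def linPoly (b : Module.Basis ι ℂ g) (v : g) : MvPolynomial ι ℂ :=
  ∑ i, MvPolynomial.C (b.repr v i) * MvPolynomial.X i

noncomputable def kirillovBracket (b : Module.Basis ι ℂ g) (f p : MvPolynomial ι ℂ) :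
    MvPolynomial ι ℂ :=
  ∑ i, ∑ j, pderiv i f * pderiv j p * linPoly b ⁅b i, b j⁆

noncomputable def evalAt (b : Module.Basis ι ℂ g) (ξ : Module.Dual ℂ g)
    (f : MvPolynomial ι ℂ) : ℂ :=
  MvPolynomial.eval (fun i => ξ (b i)) f

noncomputable def diffAt (b : Module.Basis ι ℂ g) (ξ : Module.Dual ℂ g)
    (f : MvPolynomial ι ℂ) : g :=
  ∑ i, evalAt b ξ (pderiv i f) • b i

noncomputable def dirDeriv (b : Module.Basis ι ℂ g) (a : Module.Dual ℂ g)
    (f : MvPolynomial ι ℂ) : MvPolynomial ι ℂ :=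
  ∑ i, a (b i) • pderiv i f

attribute [local instance 100] LieRing.ofAssociativeRing

/-- The coadjoint map u ↦ ad*(u)ξ (up to sign): u ↦ ξ∘(ad u). -/
noncomputable def coadMap (ξ : Module.Dual ℂ g) : g →ₗ[ℂ] Module.Dual ℂ g :=
  (LinearMap.llcomp ℂ g g ℂ ξ).comp (LieAlgebra.ad ℂ g).toLinearMap

namespace MvPolynomial

variable {σ R : Type*} [CommRing R]

theorem pderiv_comm (i j : σ) (f : MvPolynomial σ R) :
    pderiv i (pderiv j f) = pderiv j (pderiv i f) := by
  have h : ⁅pderiv i, pderiv j⁆ = (0 : Derivation R (MvPolynomial σ R) (MvPolynomial σ R)) :=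
    derivation_ext fun k => by
      classical
      rw [Derivation.commutator_apply, Derivation.zero_apply]
      simp [pderiv_X, Pi.single_apply, apply_ite (pderiv _)]
  have := congr($h f)
  rwa [Derivation.commutator_apply, Derivation.zero_apply, sub_eq_zero] at this

variable [Fintype σ]

noncomputable def pderivBracket (c : σ → σ → MvPolynomial σ R) (f p : MvPolynomial σ R) :
    MvPolynomial σ R :=
  ∑ i, ∑ j, pderiv i f * pderiv j p * c i j

variable {c : σ → σ → MvPolynomial σ R}

theorem pderivBracket_swap (hc : ∀ i j, c j i = -c i j) (f p : MvPolynomial σ R) :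
    pderivBracket c p f = -pderivBracket c f p := by
  rw [pderivBracket, Finset.sum_comm, pderivBracket, ← Finset.sum_neg_distrib]
  refine Finset.sum_congr rfl fun i _ => ?_
  rw [← Finset.sum_neg_distrib]
  refine Finset.sum_congr rfl fun j _ => ?_
  rw [hc]
  ring

theorem pderivBracket_eq_sum_pderiv_mul (f p : MvPolynomial σ R) :
    pderivBracket c f p = ∑ j, pderiv j p * pderivBracket c f (X j) := by
  classical
  simp only [pderivBracket, pderiv_X, Pi.single_apply, mul_ite, mul_one, mul_zero, ite_mul,
    zero_mul, Finset.sum_ite_eq, Finset.mem_univ, if_true, Finset.mul_sum]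
  rw [Finset.sum_comm]
  exact Finset.sum_congr rfl fun j _ => Finset.sum_congr rfl fun i _ => by ring

theorem map_pderivBracket (D : Derivation R (MvPolynomial σ R) (MvPolynomial σ R))
    (hD : ∀ i f, D (pderiv i f) = pderiv i (D f)) (f p : MvPolynomial σ R) :
    D (pderivBracket c f p) =
      pderivBracket c (D f) p + pderivBracket c f (D p) +
        pderivBracket (fun i j => D (c i j)) f p := by
  simp only [pderivBracket, map_sum, Derivation.leibniz, hD, smul_eq_mul,
    ← Finset.sum_add_distrib]
  exact Finset.sum_congr rfl fun i _ => Finset.sum_congr rfl fun j _ => by ring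

end MvPolynomial

namespace LinearMap.BilinForm

open Module Submodule

theorem span_le_orthogonal_span {R M : Type*} [CommSemiring R] [AddCommMonoid M] [Module R M]
    {B : LinearMap.BilinForm R M} {S : Set M} (hS : ∀ u ∈ S, ∀ v ∈ S, B u v = 0) :
    span R S ≤ B.orthogonal (span R S) :=
  span_le.2 fun v hv _ hw =>
    (span_le.2 fun u hu => hS u hu v hv : span R S ≤ LinearMap.ker (B.flip v)) hw

theorem two_mul_finrank_sub_finrank_inf_ker_le_finrank_range {K V : Type*} [Field K]
    [AddCommGroup V] [Module K V] [FiniteDimensional K V] {B : LinearMap.BilinForm K V}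
    (hB : B.IsRefl) {W : Submodule K V} (hW : W ≤ B.orthogonal W) :
    2 * (finrank K W - finrank K ↥(W ⊓ LinearMap.ker B)) ≤ finrank K (LinearMap.range B) := by
  have hker : LinearMap.ker B ≤ B.orthogonal W :=
    orthogonal_top_eq_ker hB ▸ orthogonal_le le_top
  have := finrank_mono (sup_le hW hker)
  have := finrank_sup_add_finrank_inf_eq W (LinearMap.ker B)
  have := finrank_add_finrank_orthogonal' (B := B) W
  have := LinearMap.finrank_range_add_finrank_ker B
  omega

end LinearMap.BilinForm

section LiePoisson

variable {κ : Type*} [Fintype κ] (b : Module.Basis κ ℂ g) (a ξ : Module.Dual ℂ g)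

theorem linPoly_basis (j : κ) : linPoly b (b j) = X j := by
  classical
  simp [linPoly, Finsupp.single_apply, apply_ite (C (R := ℂ)), ite_mul]

theorem linPoly_neg (v : g) : linPoly b (-v) = -linPoly b v := by
  simp [linPoly, Finset.sum_neg_distrib]

theorem pderiv_linPoly (i : κ) (v : g) : pderiv i (linPoly b v) = C (b.repr v i) := by
  classical
  simp [linPoly, pderiv_X, Pi.single_apply, mul_ite, Finset.sum_ite_eq']

theorem evalAt_linPoly (v : g) : evalAt b ξ (linPoly b v) = ξ v := by
  simp only [evalAt, linPoly, map_sum, eval_mul, eval_C, eval_X]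
  conv_rhs => rw [← b.sum_repr v]
  simp only [map_sum, map_smul, smul_eq_mul]

theorem coadMap_apply (u v : g) : coadMap ξ u v = ξ ⁅u, v⁆ := rfl

theorem evalAt_kirillovBracket (f p : MvPolynomial κ ℂ) :
    evalAt b ξ (kirillovBracket b f p) = ξ ⁅diffAt b ξ f, diffAt b ξ p⁆ := by
  simp only [kirillovBracket, diffAt, sum_lie, lie_sum, smul_lie, lie_smul, map_sum, map_smul,
    smul_eq_mul, Finset.mul_sum]
  have hev : evalAt b ξ = eval fun i => ξ (b i) := rfl
  simp only [hev, map_sum, map_mul]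
  simp only [← hev, evalAt_linPoly]
  rw [Finset.sum_comm]
  exact Finset.sum_congr rfl fun _ _ => Finset.sum_congr rfl fun _ _ => by ring

theorem kirillovBracket_eq_pderivBracket :
    kirillovBracket b = pderivBracket fun i j => linPoly b ⁅b i, b j⁆ := rfl

theorem kirillovBracket_swap (f p : MvPolynomial κ ℂ) :
    kirillovBracket b p f = -kirillovBracket b f p :=
  pderivBracket_swap (fun i j => by rw [← lie_skew, linPoly_neg]) f p

/-- The constant Poisson bracket `{f, p}_a` of the argument shift method. -/
noncomputable def frozenBracket : MvPolynomial κ ℂ → MvPolynomial κ ℂ → MvPolynomial κ ℂ :=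
  pderivBracket fun i j => C (a ⁅b i, b j⁆)

theorem frozenBracket_swap (f p : MvPolynomial κ ℂ) :
    frozenBracket b a p f = -frozenBracket b a f p :=
  pderivBracket_swap (fun i j => by rw [← lie_skew, map_neg, map_neg]) f p

def IsCasimir (F : MvPolynomial κ ℂ) : Prop :=
  ∀ p, kirillovBracket b F p = 0

theorem isCasimir_of_kirillovBracket_linPoly {F : MvPolynomial κ ℂ}
    (hF : ∀ x : g, kirillovBracket b F (linPoly b x) = 0) : IsCasimir b F := fun p => by
  rw [kirillovBracket_eq_pderivBracket, pderivBracket_eq_sum_pderiv_mul]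
  refine Finset.sum_eq_zero fun j _ => ?_
  rw [← linPoly_basis b j, ← kirillovBracket_eq_pderivBracket, hF, mul_zero]

noncomputable def dirDerivation : Derivation ℂ (MvPolynomial κ ℂ) (MvPolynomial κ ℂ) :=
  ∑ i, a (b i) • pderiv i

theorem dirDerivation_apply (f : MvPolynomial κ ℂ) : dirDerivation b a f = dirDeriv b a f := by
  rw [dirDerivation, ← Derivation.coeFnAddMonoidHom_apply, map_sum]
  simp [dirDeriv]

theorem dirDerivation_pderiv (i : κ) (f : MvPolynomial κ ℂ) :
    dirDerivation b a (pderiv i f) = pderiv i (dirDerivation b a f) := by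
  simp [dirDerivation_apply, dirDeriv, pderiv_comm i]

theorem dirDerivation_linPoly (v : g) : dirDerivation b a (linPoly b v) = C (a v) := by
  conv_rhs => rw [← b.sum_repr v]
  simp only [dirDerivation_apply, dirDeriv, pderiv_linPoly, smul_eq_C_mul, map_sum, map_smul,
    smul_eq_mul, C_mul, mul_comm]

theorem dirDerivation_kirillovBracket (f p : MvPolynomial κ ℂ) :
    dirDerivation b a (kirillovBracket b f p) =
      kirillovBracket b (dirDerivation b a f) p + kirillovBracket b f (dirDerivation b a p) +
        frozenBracket b a f p := by
  simp only [kirillovBracket_eq_pderivBracket, map_pderivBracket _ (dirDerivation_pderiv b a),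
    dirDerivation_linPoly, frozenBracket]

theorem dirDerivation_frozenBracket (f p : MvPolynomial κ ℂ) :
    dirDerivation b a (frozenBracket b a f p) =
      frozenBracket b a (dirDerivation b a f) p + frozenBracket b a f (dirDerivation b a p) := by
  simp only [frozenBracket, map_pderivBracket _ (dirDerivation_pderiv b a), derivation_C,
    add_eq_left]
  simp [pderivBracket]

variable {b}

theorem kirillovBracket_iterate_succ {F : MvPolynomial κ ℂ} (hF : IsCasimir b F) (k : ℕ)
    (p : MvPolynomial κ ℂ) :
    kirillovBracket b ((dirDeriv b a)^[k + 1] F) p =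
      -((k + 1) • frozenBracket b a ((dirDeriv b a)^[k] F) p) := by
  induction k generalizing p with
  | zero =>
    have h := congrArg (dirDerivation b a) (hF p)
    rw [dirDerivation_kirillovBracket, hF, map_zero] at h
    simp only [dirDerivation_apply] at h
    simp only [zero_add, Function.iterate_one, Function.iterate_zero_apply, one_smul]
    linear_combination h
  | succ k ih =>
    have h := congrArg (dirDerivation b a) (ih p)
    rw [dirDerivation_kirillovBracket, map_neg, map_nsmul, dirDerivation_frozenBracket] at h
    simp only [dirDerivation_apply, ← Function.iterate_succ_apply' (dirDeriv b a)] at h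
    rw [ih] at h
    linear_combination h

theorem kirillovBracket_iterate_succ_right {G : MvPolynomial κ ℂ} (hG : IsCasimir b G) (l : ℕ)
    (p : MvPolynomial κ ℂ) :
    kirillovBracket b p ((dirDeriv b a)^[l + 1] G) =
      -((l + 1) • frozenBracket b a p ((dirDeriv b a)^[l] G)) := by
  rw [kirillovBracket_swap, kirillovBracket_iterate_succ a hG, frozenBracket_swap b a p, smul_neg,
    neg_neg]

theorem frozenBracket_iterate_eq_zero {F G : MvPolynomial κ ℂ} (hF : IsCasimir b F)
    (hG : IsCasimir b G) (k l : ℕ) :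
    frozenBracket b a ((dirDeriv b a)^[k] F) ((dirDeriv b a)^[l] G) = 0 := by
  have of_kirillovBracket_eq_zero : ∀ k l,
      kirillovBracket b ((dirDeriv b a)^[k] F) ((dirDeriv b a)^[l + 1] G) = 0 →
        frozenBracket b a ((dirDeriv b a)^[k] F) ((dirDeriv b a)^[l] G) = 0 := fun k l h => by
    rw [kirillovBracket_iterate_succ_right a hG, neg_eq_zero, smul_eq_zero] at h
    exact h.resolve_left l.succ_ne_zero
  induction k generalizing l with
  | zero => exact of_kirillovBracket_eq_zero 0 l (hF _)
  | succ k ih =>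
    refine of_kirillovBracket_eq_zero (k + 1) l ?_
    rw [kirillovBracket_iterate_succ a hF, ih, smul_zero, neg_zero]

theorem kirillovBracket_iterate_eq_zero {F G : MvPolynomial κ ℂ} (hF : IsCasimir b F)
    (hG : IsCasimir b G) (k l : ℕ) :
    kirillovBracket b ((dirDeriv b a)^[k] F) ((dirDeriv b a)^[l] G) = 0 := by
  cases k with
  | zero => exact hF _
  | succ k =>
    rw [kirillovBracket_iterate_succ a hF, frozenBracket_iterate_eq_zero a hF hG, smul_zero,
      neg_zero]

end LiePoisson

theorem shifted_invariants_isotropic_general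
    (b : Module.Basis ι ℂ g)
    (r : ℕ)
    (Fi : Fin r → MvPolynomial ι ℂ)
    (Inv : Subalgebra ℂ (MvPolynomial ι ℂ))
    (hInv : ∀ p : MvPolynomial ι ℂ, p ∈ Inv ↔
      ∀ x : g, kirillovBracket b p (linPoly b x) = 0)
    (hGen : Algebra.adjoin ℂ (Set.range Fi) = Inv)
    (ξ a : Module.Dual ℂ g) :
    (∀ u ∈ Submodule.span ℂ
        {w : g | ∃ (k : ℕ) (i : Fin r), w = diffAt b ξ ((dirDeriv b a)^[k] (Fi i))},
     ∀ v ∈ Submodule.span ℂ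
        {w : g | ∃ (k : ℕ) (i : Fin r), w = diffAt b ξ ((dirDeriv b a)^[k] (Fi i))},
      ξ ⁅u, v⁆ = 0) ∧
    2 * (Module.finrank ℂ
          ↥(Submodule.span ℂ
            {w : g | ∃ (k : ℕ) (i : Fin r), w = diffAt b ξ ((dirDeriv b a)^[k] (Fi i))})
        - Module.finrank ℂ
          ↥(Submodule.span ℂ
              {w : g | ∃ (k : ℕ) (i : Fin r), w = diffAt b ξ ((dirDeriv b a)^[k] (Fi i))}
            ⊓ LinearMap.ker (coadMap ξ)))
      ≤ Module.finrank ℂ ↥(LinearMap.range (coadMap ξ)) := by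
  have : FiniteDimensional ℂ g := Module.Finite.of_basis b
  have hCasimir (i : Fin r) : IsCasimir b (Fi i) :=
    isCasimir_of_kirillovBracket_linPoly b <| (hInv _).1 <| hGen ▸ Algebra.subset_adjoin ⟨i, rfl⟩
  have hAlt : (coadMap ξ).IsAlt := fun u => by rw [coadMap_apply, lie_self, map_zero]
  set S := {w : g | ∃ (k : ℕ) (i : Fin r), w = diffAt b ξ ((dirDeriv b a)^[k] (Fi i))}
  have hW := LinearMap.BilinForm.span_le_orthogonal_span (B := coadMap ξ) (S := S) <| by
    rintro _ ⟨k, i, rfl⟩ _ ⟨l, j, rfl⟩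
    rw [coadMap_apply, ← evalAt_kirillovBracket,
      kirillovBracket_iterate_eq_zero a (hCasimir i) (hCasimir j)]
    exact map_zero (eval _)
  exact ⟨fun u hu v hv => hW hv u hu,
    LinearMap.BilinForm.two_mul_finrank_sub_finrank_inf_ker_le_finrank_range hAlt.isRefl hW⟩

/-- Let 𝔤 be a complex reductive Lie algebra of rank r with
free generators F₁,…,F_r of S(𝔤)^G.  For ξ, a ∈ 𝔤*, the subspace V_{a,ξ},
the image in T_ξ(Gξ)* of the span W of the differentials d_ξ(∂_a^k F_i), is
isotropic in the symplectic vector space 𝔤ξ; hence 2·dim V_{a,ξ} ≤ dim Gξ. -/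
theorem shifted_invariants_isotropic
    [Module.Finite ℂ g]
    (hreductive : LieAlgebra.radical ℂ g = LieAlgebra.center ℂ g)
    (b : Module.Basis ι ℂ g)
    (r : ℕ) (hr : r = LieAlgebra.rank ℂ g)
    (Fi : Fin r → MvPolynomial ι ℂ)
    (hInd : AlgebraicIndependent ℂ Fi)
    (Inv : Subalgebra ℂ (MvPolynomial ι ℂ))
    (hInv : ∀ p : MvPolynomial ι ℂ, p ∈ Inv ↔
      ∀ x : g, kirillovBracket b p (linPoly b x) = 0)
    (hGen : Algebra.adjoin ℂ (Set.range Fi) = Inv)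
    (ξ a : Module.Dual ℂ g) :
    (∀ u ∈ Submodule.span ℂ
        {w : g | ∃ (k : ℕ) (i : Fin r), w = diffAt b ξ ((dirDeriv b a)^[k] (Fi i))},
     ∀ v ∈ Submodule.span ℂ
        {w : g | ∃ (k : ℕ) (i : Fin r), w = diffAt b ξ ((dirDeriv b a)^[k] (Fi i))},
      ξ ⁅u, v⁆ = 0) ∧
    2 * (Module.finrank ℂ
          ↥(Submodule.span ℂ
            {w : g | ∃ (k : ℕ) (i : Fin r), w = diffAt b ξ ((dirDeriv b a)^[k] (Fi i))})
        - Module.finrank ℂ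
          ↥(Submodule.span ℂ
              {w : g | ∃ (k : ℕ) (i : Fin r), w = diffAt b ξ ((dirDeriv b a)^[k] (Fi i))}
            ⊓ LinearMap.ker (coadMap ξ)))
      ≤ Module.finrank ℂ ↥(LinearMap.range (coadMap ξ)) :=
  shifted_invariants_isotropic_general b r Fi Inv hInv hGen ξ a
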